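/- Fix $n \ge 1$, a real $s > 1$, a sequence $(t_m)$, and $k \ge 1$. Setting $x_j = (j-1)! \big(\sum_{m=1}^n t_m^j m^{-js} - \sum_{m=1}^n (t_m - 1)^j m^{-js}\big)$ for $1 \le j \le k$, one has $\zeta_n^{\vec{t}}(\{s\}_k) = \frac{1}{k!} B_k(x_1, \dots, x_k)$, where $B_k$ is the $k$-th complete Bell polynomial. -/

import Mathlib

/-!
Let `Z_n = ∑_k ζ_n^t({s}_k) X^k`. Splitting off the first (largest) entry of a tuple, and
noting that it contributes a factor `t_{n+1}` exactly when the next entry equals it, gives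
`Z_{n+1} (1 - t_{n+1} a X) = Z_n (1 - (t_{n+1} - 1) a X)` with `a = (n+1)^{-s}`.

On the Bell side, the recurrence defining `B_k` says that `F = ∑_k B_k(x) X^k / k!`, with
`x_j = (j-1)! p_j`, is the unique series with constant term `1` and `F' = F · ∑_i p_{i+1} X^i`;
that is, `F = exp (∑_j p_j X^j / j)`. Hence `F` turns sums of `p` into products, and for
`p_j = u^j - v^j` it is `(1 - v X) / (1 - u X)`. Both sides thus satisfy the same recursion in `n`.
-/

open Finset

/-- Weakly decreasing `k`-tuples with entries in `{1,…,n}`. -/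
def decTuples (n k : ℕ) : Finset (Fin k → ℕ) :=
  (Fintype.piFinset fun _ : Fin k => Finset.Icc 1 n).filter
    fun f => ∀ i j : Fin k, i ≤ j → f j ≤ f i

/-- Interpolation weight `∏_j t_j^{σ_j(ℓ)}`. -/
def wt (t : ℕ → ℝ) {k : ℕ} (f : Fin k → ℕ) : ℝ :=
  ∏ r ∈ Finset.range k,
    if h : r + 1 < k then
      (if f ⟨r, Nat.lt_of_succ_lt h⟩ = f ⟨r + 1, h⟩ then t (f ⟨r + 1, h⟩) else 1)
    else 1

/-- Truncated multi-interpolated value `ζ_n^{t}({s}_k)`. -/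
noncomputable def zetaTrunc (n k : ℕ) (s : ℝ) (t : ℕ → ℝ) : ℝ :=
  ∑ f ∈ decTuples n k, wt t f * ∏ j : Fin k, ((f j : ℝ) ^ s)⁻¹

/-- The complete Bell polynomials, via the standard recurrence
`B_{n+1}(x) = ∑_{i=0}^n (n choose i) B_{n-i}(x) x_{i+1}`, `B_0 = 1`. -/
noncomputable def bellComplete : ℕ → (ℕ → ℝ) → ℝ
  | 0, _ => 1
  | n + 1, x =>
      ∑ i ∈ Finset.range (n + 1),
        (n.choose i : ℝ) * bellComplete (n - i) x * x (i + 1)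
  termination_by n _ => n
  decreasing_by omega

open PowerSeries

theorem PowerSeries.eq_of_derivative_eq_mul {K : Type*} [Field K] [CharZero K] {F G Q : K⟦X⟧}
    (hF : d⁄dX K F = F * Q) (hG : d⁄dX K G = G * Q) (hF0 : constantCoeff F ≠ 0)
    (h0 : constantCoeff F = constantCoeff G) : F = G := by
  have hFF : F * F⁻¹ = 1 := PowerSeries.mul_inv_cancel F hF0
  have hquot : G * F⁻¹ = 1 := by
    refine derivative.ext ?_ (by simp [← h0, hF0])
    rw [Derivation.leibniz, derivative_inv', hF, hG, Derivation.map_one_eq_zero]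
    simp only [smul_eq_mul]
    linear_combination (-(G * F⁻¹ * Q)) * hFF
  calc F = G * F⁻¹ * F := by rw [hquot, one_mul]
    _ = G := by rw [mul_assoc, mul_comm F⁻¹, hFF, mul_one]

theorem PowerSeries.mk_pow_mul_one_sub_C_mul_X {R : Type*} [CommRing R] (c : R) :
    mk (c ^ ·) * (1 - C c * X) = 1 := by
  have hgeom : rescale c (mk 1) = mk (c ^ ·) := by
    ext n
    simp [coeff_rescale]
  have h := congrArg (rescale c) (mk_one_mul_one_sub_eq_one R)
  rwa [map_mul, map_sub, map_one, rescale_X, hgeom] at h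

noncomputable def bellSeries (p : ℕ → ℝ) : ℝ⟦X⟧ :=
  mk fun k => bellComplete k (fun j => ((j - 1).factorial : ℝ) * p j) / k.factorial

lemma constantCoeff_bellSeries (p : ℕ → ℝ) : constantCoeff (bellSeries p) = 1 := by
  rw [← coeff_zero_eq_constantCoeff_apply, bellSeries, coeff_mk, bellComplete]
  simp

lemma derivative_bellSeries (p : ℕ → ℝ) :
    d⁄dX ℝ (bellSeries p) = bellSeries p * mk fun i => p (i + 1) := by
  ext k
  rw [coeff_derivative, mul_comm (bellSeries p), coeff_mul,
    Finset.Nat.sum_antidiagonal_eq_sum_range_succ_mk]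
  simp only [bellSeries, coeff_mk, bellComplete, sum_div, sum_mul]
  refine sum_congr rfl fun i hi => ?_
  have hik : i ≤ k := Nat.lt_succ_iff.mp (mem_range.mp hi)
  have hchoose : (k.choose i : ℝ) * i.factorial * (k - i).factorial = k.factorial := by
    exact_mod_cast Nat.choose_mul_factorial_mul_factorial hik
  rw [Nat.add_sub_cancel, Nat.factorial_succ]
  push_cast
  field_simp
  linear_combination
    (bellComplete (k - i) fun j => ((j - 1).factorial : ℝ) * p j) * p (i + 1) * hchoose

lemma eq_bellSeries_of_derivative {G : ℝ⟦X⟧} {p : ℕ → ℝ} (h0 : constantCoeff G = 1)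
    (hG : d⁄dX ℝ G = G * mk fun i => p (i + 1)) : G = bellSeries p :=
  eq_of_derivative_eq_mul hG (derivative_bellSeries p) (by simp [h0])
    (by rw [h0, constantCoeff_bellSeries])

lemma bellSeries_zero : bellSeries 0 = 1 :=
  (eq_bellSeries_of_derivative (map_one _) (by ext; simp)).symm

lemma bellSeries_add (p q : ℕ → ℝ) : bellSeries (p + q) = bellSeries p * bellSeries q := by
  refine (eq_bellSeries_of_derivative (by simp [constantCoeff_bellSeries]) ?_).symm
  have hsplit : (mk fun i => (p + q) (i + 1))
      = (mk fun i => p (i + 1)) + mk fun i => q (i + 1) := by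
    ext
    simp
  rw [Derivation.leibniz, derivative_bellSeries, derivative_bellSeries, hsplit, smul_eq_mul,
    smul_eq_mul]
  ring

lemma bellSeries_pow_sub_pow_mul (u v : ℝ) :
    bellSeries (fun j => u ^ j - v ^ j) * (1 - C u * X) = 1 - C v * X := by
  have hE := mk_pow_mul_one_sub_C_mul_X (R := ℝ)
  have hdE (c : ℝ) : d⁄dX ℝ (mk (c ^ ·)) = C c * mk (c ^ ·) ^ 2 := by
    have h := congrArg (d⁄dX ℝ) (hE c)
    simp only [map_sub, Derivation.map_one_eq_zero, Derivation.leibniz, derivative_C,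
      derivative_X, smul_eq_mul] at h
    linear_combination (mk (c ^ ·)) * h - d⁄dX ℝ (mk (c ^ ·)) * hE c
  have hlog : (mk fun i => u ^ (i + 1) - v ^ (i + 1)) = C u * mk (u ^ ·) - C v * mk (v ^ ·) := by
    ext; simp [pow_succ, mul_comm]
  have hB : bellSeries (fun j => u ^ j - v ^ j) = mk (u ^ ·) * (1 - C v * X) := by
    refine (eq_bellSeries_of_derivative (by simp) ?_).symm
    rw [Derivation.leibniz, hdE, hlog]
    simp only [map_sub, Derivation.map_one_eq_zero, Derivation.leibniz, derivative_C,
      derivative_X, smul_eq_mul]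
    linear_combination (C v * mk (u ^ ·)) * hE v
  rw [hB]
  linear_combination (1 - C v * X) * hE u

lemma Fin.antitone_cons {α : Type*} [Preorder α] {k : ℕ} {a : α} {f : Fin k → α} :
    Antitone (Fin.cons a f : Fin (k + 1) → α) ↔ (∀ i, f i ≤ a) ∧ Antitone f := by
  simpa only [antitone_iff_forall_lt] using!
    Fin.liftFun_cons (α := α) (· ≥ ·) (f := f) (a := a)

lemma mem_decTuples {n k : ℕ} {f : Fin k → ℕ} :
    f ∈ decTuples n k ↔ (∀ i, f i ∈ Icc 1 n) ∧ Antitone f := by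
  simp [decTuples, Antitone]

lemma cons_mem_decTuples {n k x : ℕ} {g : Fin k → ℕ} :
    (Fin.cons x g : Fin (k + 1) → ℕ) ∈ decTuples n (k + 1) ↔
      x ∈ Icc 1 n ∧ g ∈ decTuples x k := by
  simp only [mem_decTuples, Fin.antitone_cons, Fin.forall_fin_succ, Fin.cons_zero, Fin.cons_succ,
    mem_Icc]
  constructor
  · rintro ⟨⟨hx, hg⟩, hgx, hanti⟩
    exact ⟨hx, fun i => ⟨(hg i).1, hgx i⟩, hanti⟩
  · rintro ⟨hx, hg, hanti⟩
    exact ⟨⟨hx, fun i => ⟨(hg i).1, (hg i).2.trans hx.2⟩⟩, fun i => (hg i).2, hanti⟩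

lemma decTuples_succ_filter_forall_lt (n k : ℕ) :
    (decTuples (n + 1) k).filter (fun f => ∀ i, f i < n + 1) = decTuples n k := by
  ext f
  simp only [mem_filter, mem_decTuples, mem_Icc, Nat.lt_succ_iff]
  constructor
  · rintro ⟨⟨hf, hanti⟩, hlt⟩
    exact ⟨fun i => ⟨(hf i).1, hlt i⟩, hanti⟩
  · rintro ⟨hf, hanti⟩
    exact ⟨⟨fun i => ⟨(hf i).1, (hf i).2.trans n.le_succ⟩, hanti⟩, fun i => (hf i).2⟩

section

variable (s : ℝ) (t : ℕ → ℝ)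

lemma wt_cons {k : ℕ} (x : ℕ) (g : Fin (k + 1) → ℕ) :
    wt t (Fin.cons x g : Fin (k + 2) → ℕ) = (if x = g 0 then t x else 1) * wt t g := by
  rw [wt, prod_range_succ', mul_comm, wt]
  congr 1
  · by_cases h : x = g 0 <;> simp [h]
  · refine prod_congr rfl fun r _ => ?_
    by_cases h : r + 1 < k + 1
    · rw [dif_pos h, dif_pos (by omega)]
      rfl
    · rw [dif_neg h, dif_neg (by omega)]

lemma wt_cons_of_antitone {k x : ℕ} {g : Fin k → ℕ} (hg : Antitone g)
    (hx : ∀ i, g i ≤ x) :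
    wt t (Fin.cons x g : Fin (k + 1) → ℕ) = (if ∀ i, g i < x then 1 else t x) * wt t g := by
  cases k with
  | zero => simp [wt]
  | succ k =>
    have hhead : (∀ i, g i < x) ↔ x ≠ g 0 :=
      ⟨fun h => (h 0).ne', fun h i => (hg (Fin.zero_le i)).trans_lt ((hx 0).lt_of_ne h.symm)⟩
    rw [wt_cons, if_congr hhead rfl rfl]
    by_cases h : x = g 0 <;> simp [h]

noncomputable def zetaTerm {k : ℕ} (f : Fin k → ℕ) : ℝ :=
  wt t f * ∏ j : Fin k, ((f j : ℝ) ^ s)⁻¹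

lemma zetaTrunc_eq_sum_zetaTerm (n k : ℕ) :
    zetaTrunc n k s t = ∑ f ∈ decTuples n k, zetaTerm s t f :=
  rfl

lemma zetaTerm_cons_of_antitone {k x : ℕ} {g : Fin k → ℕ} (hg : Antitone g)
    (hx : ∀ i, g i ≤ x) :
    zetaTerm s t (Fin.cons x g : Fin (k + 1) → ℕ)
      = ((x : ℝ) ^ s)⁻¹ * ((if ∀ i, g i < x then 1 else t x) * zetaTerm s t g) := by
  rw [zetaTerm, zetaTerm, wt_cons_of_antitone t hg hx, Fin.prod_univ_succ]
  simp only [Fin.cons_zero, Fin.cons_succ]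
  ring

lemma zetaTrunc_depth_zero (n : ℕ) : zetaTrunc n 0 s t = 1 := by
  simp [zetaTrunc, decTuples, wt]

lemma zetaTrunc_succ_depth (n k : ℕ) :
    zetaTrunc n (k + 1) s t = ∑ x ∈ Icc 1 n, ((x : ℝ) ^ s)⁻¹ *
      ∑ g ∈ decTuples x k, (if ∀ i, g i < x then 1 else t x) * zetaTerm s t g := by
  simp_rw [mul_sum]
  rw [sum_sigma']
  symm
  refine sum_nbij' (fun p => (Fin.cons p.1 p.2 : Fin (k + 1) → ℕ))
    (fun f => ⟨f 0, Fin.tail f⟩) ?_ ?_ ?_ ?_ ?_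
  · rintro ⟨x, g⟩ h
    simpa [cons_mem_decTuples] using h
  · intro f hf
    rw [← Fin.cons_self_tail f, cons_mem_decTuples] at hf
    simpa using hf
  · rintro ⟨x, g⟩ _
    simp
  · intro f _
    exact Fin.cons_self_tail f
  · rintro ⟨x, g⟩ h
    obtain ⟨hbound, hanti⟩ := mem_decTuples.1 (mem_sigma.1 h).2
    exact (zetaTerm_cons_of_antitone s t hanti fun i => (mem_Icc.1 (hbound i)).2).symm

lemma sum_decTuples_succ_ite (n k : ℕ) (c : ℝ) :
    ∑ g ∈ decTuples (n + 1) k, (if ∀ i, g i < n + 1 then 1 else c) * zetaTerm s t g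
      = zetaTrunc n k s t + c * (zetaTrunc (n + 1) k s t - zetaTrunc n k s t) := by
  have hsplit := sum_filter_add_sum_filter_not (decTuples (n + 1) k)
    (fun g => ∀ i, g i < n + 1) (zetaTerm s t)
  rw [decTuples_succ_filter_forall_lt] at hsplit
  simp_rw [ite_mul, one_mul]
  rw [sum_ite, decTuples_succ_filter_forall_lt, ← mul_sum, zetaTrunc_eq_sum_zetaTerm,
    zetaTrunc_eq_sum_zetaTerm]
  linear_combination c * hsplit

lemma zetaTrunc_succ_succ (n k : ℕ) :
    zetaTrunc (n + 1) (k + 1) s t = zetaTrunc n (k + 1) s t + (((n + 1 : ℕ) : ℝ) ^ s)⁻¹ *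
      (zetaTrunc n k s t + t (n + 1) * (zetaTrunc (n + 1) k s t - zetaTrunc n k s t)) := by
  rw [zetaTrunc_succ_depth, sum_Icc_succ_top (Nat.le_add_left 1 n), ← zetaTrunc_succ_depth,
    sum_decTuples_succ_ite]

lemma zetaTrunc_zero_succ (k : ℕ) : zetaTrunc 0 (k + 1) s t = 0 := by
  simp [zetaTrunc_succ_depth]

noncomputable def zetaSeries (n : ℕ) : ℝ⟦X⟧ :=
  mk fun k => zetaTrunc n k s t

lemma zetaSeries_zero : zetaSeries s t 0 = 1 := by
  ext (_ | k)
  · simp [zetaSeries, zetaTrunc_depth_zero]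
  · simp [zetaSeries, zetaTrunc_zero_succ, coeff_one]

lemma zetaSeries_succ_mul (n : ℕ) :
    let a := (((n + 1 : ℕ) : ℝ) ^ s)⁻¹
    zetaSeries s t (n + 1) * (1 - C (t (n + 1) * a) * X)
      = zetaSeries s t n * (1 - C ((t (n + 1) - 1) * a) * X) := by
  intro a
  ext (_ | k)
  · simp [zetaSeries, zetaTrunc_depth_zero]
  · simp only [mul_sub, mul_one, ← mul_assoc, map_sub, coeff_succ_mul_X, zetaSeries, coeff_mk]
    rw [mul_comm _ (C _), coeff_C_mul, mul_comm _ (C _), coeff_C_mul, coeff_mk, coeff_mk,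
      zetaTrunc_succ_succ]
    ring

noncomputable def zetaPowerSum (n j : ℕ) : ℝ :=
  ∑ m ∈ Icc 1 n, ((t m * ((m : ℝ) ^ s)⁻¹) ^ j - ((t m - 1) * ((m : ℝ) ^ s)⁻¹) ^ j)

lemma zetaSeries_eq_bellSeries (n : ℕ) : zetaSeries s t n = bellSeries (zetaPowerSum s t n) := by
  induction n with
  | zero =>
    rw [zetaSeries_zero, ← bellSeries_zero]
    exact congrArg bellSeries (funext fun j => by simp [zetaPowerSum])
  | succ n ih =>
    set a := (((n + 1 : ℕ) : ℝ) ^ s)⁻¹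
    have hsplit : zetaPowerSum s t (n + 1)
        = zetaPowerSum s t n + fun j => (t (n + 1) * a) ^ j - ((t (n + 1) - 1) * a) ^ j := by
      funext j
      rw [Pi.add_apply, zetaPowerSum, zetaPowerSum, sum_Icc_succ_top (Nat.le_add_left 1 n)]
    have hunit : (1 - C (t (n + 1) * a) * X : ℝ⟦X⟧) ≠ 0 := fun h => by
      simpa using congrArg constantCoeff h
    refine mul_right_cancel₀ hunit ?_
    rw [zetaSeries_succ_mul, ih, hsplit, bellSeries_add, mul_assoc, bellSeries_pow_sub_pow_mul]

end

theorem zetaTrunc_bell_general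
    (n : ℕ) (s : ℝ) (t : ℕ → ℝ) (k : ℕ) :
    zetaTrunc n k s t
      = (1 / (k.factorial : ℝ)) * bellComplete k (fun j =>
          ((j - 1).factorial : ℝ) *
            ((∑ m ∈ Finset.Icc 1 n, t m ^ j * ((m : ℝ) ^ ((j : ℝ) * s))⁻¹)
              - ∑ m ∈ Finset.Icc 1 n, (t m - 1) ^ j * ((m : ℝ) ^ ((j : ℝ) * s))⁻¹)) := by
  have h := congrArg (coeff k) (zetaSeries_eq_bellSeries s t n)
  rw [zetaSeries, bellSeries, coeff_mk, coeff_mk] at h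
  rw [h, one_div_mul_eq_div]
  congr
  funext j
  rw [zetaPowerSum, ← sum_sub_distrib]
  refine congrArg _ (sum_congr rfl fun m _ => ?_)
  rw [mul_comm (j : ℝ) s, Real.rpow_mul_natCast (Nat.cast_nonneg m), ← inv_pow, mul_pow,
    mul_pow]

/-- Bell polynomial expression for truncated multi-interpolated values:
`ζ_n^t({s}_k) = B_k(x_1,…,x_k)/k!` with
`x_j = (j-1)! (∑_{m=1}^n t_m^j m^{-js} - ∑_{m=1}^n (t_m-1)^j m^{-js})`. -/
theorem zetaTrunc_bell
    (n : ℕ) (hn : 1 ≤ n) (s : ℝ) (hs : 1 < s) (t : ℕ → ℝ) (k : ℕ) (hk : 1 ≤ k) :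
    zetaTrunc n k s t
      = (1 / (k.factorial : ℝ)) * bellComplete k (fun j =>
          ((j - 1).factorial : ℝ) *
            ((∑ m ∈ Finset.Icc 1 n, t m ^ j * ((m : ℝ) ^ ((j : ℝ) * s))⁻¹)
              - ∑ m ∈ Finset.Icc 1 n, (t m - 1) ^ j * ((m : ℝ) ^ ((j : ℝ) * s))⁻¹)) :=
  zetaTrunc_bell_general n s t k
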